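/- Let (G, H, Γ) be a cut-and-project scheme and W₀ ⊂ H compact with non-empty interior. Then the model set Λ = π_G((G × W₀) ∩ Γ) satisfies the approximate group condition: there is a finite set F ⊂ G with Λ² ⊂ FΛ. -/

import Mathlib

open scoped Pointwise

/-!
Since `π_H(Γ)` is dense, the translates `π_H(γ) · int W₀`, `γ ∈ Γ`, cover `H`, so finitely many
of them cover the compact set `W₀ W₀`. Products in `Λ` have window coordinate in `W₀ W₀`, and the
points of `Γ` whose window coordinate lies in `π_H(γ) · W₀` project into `π_G(γ) · Λ`.
-/

section Cover

variable {H ι : Type*} [Group H] [TopologicalSpace H] [IsTopologicalGroup H]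

theorem DenseRange.iUnion_smul_eq_univ {f : ι → H} (hf : DenseRange f) {U : Set H}
    (hU : IsOpen U) (hne : U.Nonempty) : ⋃ i, f i • U = Set.univ := by
  refine Set.iUnion_eq_univ_iff.2 fun x ↦ ?_
  obtain ⟨u, hu⟩ := hne
  obtain ⟨i, hi⟩ := hf.exists_mem_open (hU.inv.smul x) ⟨x * u⁻¹, u⁻¹, by simpa using hu, rfl⟩
  obtain ⟨v, hv, hvx⟩ := hi
  exact ⟨i, v⁻¹, hv, by simp [← hvx]⟩

theorem IsCompact.exists_finset_subset_iUnion_smul {f : ι → H} (hf : DenseRange f) {K U : Set H}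
    (hK : IsCompact K) (hU : IsOpen U) (hne : U.Nonempty) :
    ∃ I : Finset ι, K ⊆ ⋃ i ∈ I, f i • U :=
  hK.elim_finite_subcover (fun i ↦ f i • U) (fun _ ↦ hU.smul _)
    (hf.iUnion_smul_eq_univ hU hne ▸ Set.subset_univ K)

end Cover

section ModelSet

variable {G H : Type*} [Group G] [Group H] (Γ : Subgroup (G × H))

def modelSet (W : Set H) : Set G :=
  Prod.fst '' ((Γ : Set (G × H)) ∩ Set.univ ×ˢ W)

variable {Γ}

theorem mem_modelSet {W : Set H} {g : G} : g ∈ modelSet Γ W ↔ ∃ h ∈ W, (g, h) ∈ Γ := by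
  constructor
  · rintro ⟨⟨g, h⟩, ⟨hΓ, -, hW⟩, rfl⟩
    exact ⟨h, hW, hΓ⟩
  · rintro ⟨h, hW, hΓ⟩
    exact ⟨(g, h), ⟨hΓ, trivial, hW⟩, rfl⟩

theorem modelSet_mono : Monotone (modelSet Γ) := fun _ _ hWV ↦
  Set.image_mono (Set.inter_subset_inter_right _ (Set.prod_mono le_rfl hWV))

theorem modelSet_mul_subset (W V : Set H) : modelSet Γ W * modelSet Γ V ⊆ modelSet Γ (W * V) := by
  rintro _ ⟨a, ha, b, hb, rfl⟩
  obtain ⟨w, hw, haΓ⟩ := mem_modelSet.1 ha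
  obtain ⟨v, hv, hbΓ⟩ := mem_modelSet.1 hb
  exact mem_modelSet.2 ⟨w * v, Set.mul_mem_mul hw hv, mul_mem haΓ hbΓ⟩

theorem modelSet_iUnion {ι : Sort*} (W : ι → Set H) :
    modelSet Γ (⋃ i, W i) = ⋃ i, modelSet Γ (W i) := by
  simp only [modelSet, Set.prod_iUnion, Set.inter_iUnion, Set.image_iUnion]

theorem modelSet_smul {γ : G × H} (hγ : γ ∈ Γ) (W : Set H) :
    modelSet Γ (γ.2 • W) = γ.1 • modelSet Γ W := by
  obtain ⟨a, b⟩ := γ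
  ext g
  simp only [Set.mem_smul_set_iff_inv_smul_mem, mem_modelSet, smul_eq_mul]
  constructor
  · rintro ⟨h, hW, hΓ⟩
    exact ⟨b⁻¹ * h, hW, mul_mem (inv_mem hγ) hΓ⟩
  · rintro ⟨h, hW, hΓ⟩
    refine ⟨b * h, by simpa using hW, ?_⟩
    simpa using mul_mem hγ hΓ

end ModelSet

theorem modelSet_approximateGroupCondition_general
    {G H : Type*} [Group G]
    [Group H] [TopologicalSpace H] [IsTopologicalGroup H]
    (Γ : Subgroup (G × H))
    (hdense : Dense (Prod.snd '' (Γ : Set (G × H))))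
    (W₀ : Set H) (hW₀ : IsCompact W₀) (hWint : (interior W₀).Nonempty)
    (Λ : Set G) (hΛ : Λ = Prod.fst '' ((Γ : Set (G × H)) ∩ Set.univ ×ˢ W₀)) :
    ∃ F : Finset G, Λ * Λ ⊆ (F : Set G) * Λ := by
  classical
  change Λ = modelSet Γ W₀ at hΛ
  subst hΛ
  have hΓdense : DenseRange fun γ : Γ ↦ (γ : G × H).2 := by
    change Dense (Set.range (Prod.snd ∘ Subtype.val))
    rwa [Set.range_comp, Subtype.range_coe]
  obtain ⟨I, hI⟩ := (hW₀.mul hW₀).exists_finset_subset_iUnion_smul hΓdense isOpen_interior hWint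
  refine ⟨I.image fun γ : Γ ↦ (γ : G × H).1, ?_⟩
  calc modelSet Γ W₀ * modelSet Γ W₀
      ⊆ modelSet Γ (W₀ * W₀) := modelSet_mul_subset W₀ W₀
    _ ⊆ modelSet Γ (⋃ γ ∈ I, (γ : G × H).2 • interior W₀) := modelSet_mono hI
    _ = ⋃ γ ∈ I, (γ : G × H).1 • modelSet Γ (interior W₀) := by
      simp only [modelSet_iUnion, modelSet_smul (SetLike.coe_mem _)]
    _ ⊆ ⋃ γ ∈ I, (γ : G × H).1 • modelSet Γ W₀ := by
      gcongr
      exact modelSet_mono interior_subset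
    _ = _ := by rw [Finset.coe_image, ← Set.iUnion_mul_left_image, Set.biUnion_image]; rfl

/-- For a cut-and-project scheme `(G, H, Γ)` and a compact window `W₀ ⊆ H`
with nonempty interior, the model set `Λ = π_G((G × W₀) ∩ Γ)` satisfies the approximate
group condition: `Λ² ⊆ FΛ` for some finite `F ⊆ G`. -/
theorem modelSet_approximateGroupCondition
    {G H : Type*} [Group G] [TopologicalSpace G] [IsTopologicalGroup G]
    [LocallyCompactSpace G] [SecondCountableTopology G]
    [Group H] [TopologicalSpace H] [IsTopologicalGroup H]
    [LocallyCompactSpace H] [SecondCountableTopology H]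
    (Γ : Subgroup (G × H)) (hdisc : DiscreteTopology ↥Γ)
    (hclosed : IsClosed (Γ : Set (G × H)))
    (hinj : Set.InjOn Prod.fst (Γ : Set (G × H)))
    (hdense : Dense (Prod.snd '' (Γ : Set (G × H))))
    (W₀ : Set H) (hW₀ : IsCompact W₀) (hWint : (interior W₀).Nonempty)
    (Λ : Set G) (hΛ : Λ = Prod.fst '' ((Γ : Set (G × H)) ∩ Set.univ ×ˢ W₀)) :
    ∃ F : Finset G, Λ * Λ ⊆ (F : Set G) * Λ :=
  modelSet_approximateGroupCondition_general Γ hdense W₀ hW₀ hWint Λ hΛ
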